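/- arXiv:1605.07922 — 5 statements merged into one kernel-verified Lean document; each statement's English description precedes it below -/
import Mathlib

section
/- Let a ∈ M(α,β,Ω) and let P_pot : [L²(Ω)]^d → ∇H¹₀(Ω) denote the L²-orthogonal projection onto the space of gradients of H¹₀(Ω) functions. Define the a-flux-norm of w ∈ H¹₀(Ω) by ‖w‖_{a-flux} := ‖P_pot(a∇w)‖_{L²(Ω)}. Then the flux norm is equivalent to the energy norm: α‖∇w‖_{L²(Ω)} ≤ ‖w‖_{a-flux} ≤ β‖∇w‖_{L²(Ω)} for all w ∈ H¹₀(Ω). -/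
/-!
Since `∇w ∈ G`, testing against `∇w` does not see the projection:
`⟪P_pot(a∇w), ∇w⟫ = ⟪a∇w, ∇w⟫ ≥ α‖∇w‖²`, so Cauchy–Schwarz gives the lower bound.
The upper bound holds because an orthogonal projection has norm at most `1`.
-/

open scoped RealInnerProductSpace

theorem mul_norm_le_norm_of_mul_norm_sq_le_inner {E : Type*} [NormedAddCommGroup E]
    [InnerProductSpace ℝ E] {α : ℝ} {u v : E} (h : α * ‖v‖ ^ 2 ≤ ⟪u, v⟫) :
    α * ‖v‖ ≤ ‖u‖ := by
  rcases (norm_nonneg v).eq_or_lt with hv | hv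
  · rw [← hv, mul_zero]
    exact norm_nonneg u
  · refine le_of_mul_le_mul_right ?_ hv
    calc α * ‖v‖ * ‖v‖ = α * ‖v‖ ^ 2 := by ring
      _ ≤ ⟪u, v⟫ := h
      _ ≤ ‖u‖ * ‖v‖ := real_inner_le_norm u v

theorem stmt1_general {V H : Type*} [AddCommGroup V] [Module ℝ V]
    [NormedAddCommGroup H] [InnerProductSpace ℝ H]
    (α β : ℝ)
    (G : Submodule ℝ H) [G.HasOrthogonalProjection]
    (grad : V →ₗ[ℝ] H)  -- `w ↦ ∇w`
    (flux : V →ₗ[ℝ] H)  -- `w ↦ a∇w`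
    (hrange : ∀ w : V, grad w ∈ G)
    (hlow : ∀ w : V, α * ‖grad w‖ ^ 2 ≤ ⟪flux w, grad w⟫)
    (hup : ∀ w : V, ‖flux w‖ ≤ β * ‖grad w‖) :
    ∀ w : V, α * ‖grad w‖ ≤ ‖(G.orthogonalProjectionOnto (flux w) : H)‖ ∧
      ‖(G.orthogonalProjectionOnto (flux w) : H)‖ ≤ β * ‖grad w‖ := by
  intro w
  refine ⟨mul_norm_le_norm_of_mul_norm_sq_le_inner ?_,
    (G.norm_orthogonalProjectionOnto_apply_le (flux w)).trans (hup w)⟩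
  calc α * ‖grad w‖ ^ 2 ≤ ⟪flux w, grad w⟫ := hlow w
    _ = ⟪(G.orthogonalProjectionOnto (flux w) : H), grad w⟫ :=
      (G.inner_orthogonalProjectionOnto_eq_of_mem_right ⟨grad w, hrange w⟩ (flux w)).symm

/-- the `a`-flux norm `‖w‖_{a-flux} = ‖P_pot(a∇w)‖_{L²}` is equivalent to the
energy norm: `α‖∇w‖ ≤ ‖P_pot(a∇w)‖ ≤ β‖∇w‖`.  Here `H = [L²(Ω)]^d`, `G = ∇H¹₀(Ω)` is the
closed subspace of potential fields, `P_pot = orthogonalProjection G`, `grad w = ∇w` and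
`flux w = a∇w`; the hypotheses `hlow`, `hup` encode the uniform spectral bounds
`α|ξ|² ≤ a(x)ξ·ξ ≤ β|ξ|²` of `a ∈ M(α,β,Ω)`. -/
theorem stmt1 {V H : Type*} [AddCommGroup V] [Module ℝ V]
    [NormedAddCommGroup H] [InnerProductSpace ℝ H] [CompleteSpace H]
    (α β : ℝ) (hα : 0 < α) (hαβ : α ≤ β)
    (G : Submodule ℝ H) (hGclosed : IsClosed (G : Set H)) [G.HasOrthogonalProjection]
    (grad : V →ₗ[ℝ] H)  -- `w ↦ ∇w`
    (flux : V →ₗ[ℝ] H)  -- `w ↦ a∇w`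
    (hrange : ∀ w : V, grad w ∈ G)
    (hlow : ∀ w : V, α * ‖grad w‖ ^ 2 ≤ ⟪flux w, grad w⟫)
    (hup : ∀ w : V, ‖flux w‖ ≤ β * ‖grad w‖) :
    ∀ w : V, α * ‖grad w‖ ≤ ‖(G.orthogonalProjectionOnto (flux w) : H)‖ ∧
      ‖(G.orthogonalProjectionOnto (flux w) : H)‖ ≤ β * ‖grad w‖ :=
  stmt1_general α β G grad flux hrange hlow hup
end

section
/- Let V_H ⊂ H¹₀(Ω) be a finite-dimensional subspace and let z_ε, z ∈ H¹₀(Ω) solve ∫_Ω a^ε ∇z_ε·∇v = ∫_Ω F v and ∫_Ω ∇z·∇v = ∫_Ω F v for all v ∈ H¹₀(Ω), where F ∈ L²(Ω). Set V_{H,a^ε} := {w ∈ H¹₀(Ω) : ∇·(a^ε∇w) = ∇·(∇v_H) for some v_H ∈ V_H} (the transferred space). Then the best-approximation errors in the respective flux norms coincide: inf_{v_H ∈ V_H} ‖z − v_H‖_{1-flux} = inf_{w ∈ V_{H,a^ε}} ‖z_ε − w‖_{a^ε-flux}. -/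
/-!
Both `z` and `Aε zε` represent `F`, so `Aε zε = z`; by Lax–Milgram the coercive operator `Aε` is
onto, so `w ↦ Aε w` maps the transferred space onto `V_H`. The `a^ε`-flux error
`‖Aε zε - Aε w‖ = ‖z - Aε w‖` therefore runs through exactly the `1`-flux errors `‖z - v_H‖`,
and the two infima are infima of the same set of reals.
-/

open scoped RealInnerProductSpace

theorem ContinuousLinearMap.surjective_of_coercive {V : Type*} [NormedAddCommGroup V]
    [InnerProductSpace ℝ V] [CompleteSpace V] (A : V →L[ℝ] V) {α : ℝ} (hα : 0 < α)
    (hcoer : ∀ v : V, α * ‖v‖ ^ 2 ≤ ⟪A v, v⟫) : Function.Surjective A := by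
  set B : V →L[ℝ] V →L[ℝ] ℝ := (innerSL ℝ).comp A
  have hB : IsCoercive B := ⟨α, hα, fun v => by simpa [B, sq, mul_assoc] using hcoer v⟩
  have hB_sharp : InnerProductSpace.continuousLinearMapOfBilin B = A :=
    ext fun u => (InnerProductSpace.unique_continuousLinearMapOfBilin B fun _ => rfl).symm
  have hrange := hB.range_eq_top
  rw [hB_sharp] at hrange
  exact LinearMap.range_eq_top.mp hrange

/- `V` is `H¹₀(Ω)` with the norm `‖∇·‖_{L²}` and `⟪Aε u, v⟫ = ∫ a^ε∇u·∇v`, so the `a^ε`-flux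
norm of `u` is `‖Aε u‖` and the transferred space is `{w // Aε w ∈ V_H}`. -/
theorem stmt2_general {V : Type*} [NormedAddCommGroup V] [InnerProductSpace ℝ V] [CompleteSpace V]
    (α : ℝ) (hα : 0 < α)
    (Aε : V →L[ℝ] V)
    (hcoer : ∀ v : V, α * ‖v‖ ^ 2 ≤ ⟪Aε v, v⟫)
    (VH : Submodule ℝ V)
    (F : V →L[ℝ] ℝ) (z zε : V)
    (hz : ∀ v : V, ⟪z, v⟫ = F v) (hzε : ∀ v : V, ⟪Aε zε, v⟫ = F v) :
    (⨅ vH : VH, ‖z - (vH : V)‖) =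
      ⨅ w : {w : V // Aε w ∈ VH}, ‖Aε zε - Aε (w : V)‖ := by
  have hAz : Aε zε = z := ext_inner_right ℝ fun v => by rw [hzε, hz]
  rw [hAz]
  exact ((Aε.surjective_of_coercive hα hcoer).restrictPreimage (VH : Set V)).iInf_comp
    (fun vH => ‖z - (vH : V)‖) |>.symm

/-- the transfer property of the flux norm.  We work in the Hilbert space
`V = H¹₀(Ω)` equipped with the energy norm `‖∇·‖_{L²}`.  The bilinear form
`∫_Ω a^ε∇u·∇v` is represented by the bounded symmetric coercive operator `Aε` (so that
`∫ a^ε∇u·∇v = ⟪Aε u, v⟫`), and the `a^ε`-flux norm of `u` is `‖Aε u‖` while the `1`-flux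
norm is the norm of `V` itself.  `z` and `z_ε` solve `∫ ∇z·∇v = F(v)` and
`∫ a^ε∇z_ε·∇v = F(v)` for all `v ∈ H¹₀(Ω)`.  The transferred space
`V_{H,a^ε} = {w : ∇·(a^ε∇w) = Δv_H for some v_H ∈ V_H}` is `{w // Aε w ∈ V_H}`, and the
best-approximation errors in the respective flux norms coincide. -/
theorem stmt2 {V : Type*} [NormedAddCommGroup V] [InnerProductSpace ℝ V] [CompleteSpace V]
    (α β : ℝ) (hα : 0 < α) (hαβ : α ≤ β)
    (Aε : V →L[ℝ] V)
    (hsym : ∀ u v : V, ⟪Aε u, v⟫ = ⟪u, Aε v⟫)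
    (hcoer : ∀ v : V, α * ‖v‖ ^ 2 ≤ ⟪Aε v, v⟫)
    (hbd : ∀ v : V, ‖Aε v‖ ≤ β * ‖v‖)
    (VH : Submodule ℝ V) [FiniteDimensional ℝ VH]
    (F : V →L[ℝ] ℝ) (z zε : V)
    (hz : ∀ v : V, ⟪z, v⟫ = F v) (hzε : ∀ v : V, ⟪Aε zε, v⟫ = F v) :
    (⨅ vH : VH, ‖z - (vH : V)‖) =
      ⨅ w : {w : V // Aε w ∈ VH}, ‖Aε zε - Aε (w : V)‖ :=
  stmt2_general α hα Aε hcoer VH F z zε hz hzε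
end

section
/- Let V_h ⊂ H¹₀(Ω) be a finite-dimensional space, V_H ⊂ V_h a subspace, P_H : V_h → V_H the L²-orthogonal projection, and W_h := ker(P_H) ∩ V_h. Let a ∈ M(α,β,Ω) and define Q_h : V_H → W_h by (a∇Q_h(v_H), ∇w_h)_{L²} = −(a∇v_H, ∇w_h)_{L²} for all w_h ∈ W_h. Then V_h = V_H^{ms} ⊕ W_h where V_H^{ms} := {v_H + Q_h(v_H) : v_H ∈ V_H}, and this decomposition is orthogonal with respect to the inner product (a∇·, ∇·)_{L²(Ω)}. -/
/-- the Localized Orthogonal Decomposition.  `V` is the finite element space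
`V_h`, `m` is the `L²` inner product, `B(u,v) = (a∇u,∇v)_{L²}` is the energy inner product
(both symmetric positive definite since `a ∈ M(α,β,Ω)`), `P_H` is the `L²`-orthogonal
projection onto `V_H` and `W_h = ker P_H`.  The corrector `Q : V_H → W_h` satisfies
`B(Q v_H, w_h) = −B(v_H, w_h)` for all `w_h ∈ W_h`.  Then
`V_h = V_H^{ms} ⊕ W_h` with `V_H^{ms} = {v_H + Q v_H : v_H ∈ V_H}`, and the decomposition
is `B`-orthogonal. -/
theorem stmt3 {V : Type*} [AddCommGroup V] [Module ℝ V] [FiniteDimensional ℝ V]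
    (m B : V →ₗ[ℝ] V →ₗ[ℝ] ℝ)
    (hmsym : ∀ u v, m u v = m v u) (hmpos : ∀ v, v ≠ 0 → 0 < m v v)
    (hBsym : ∀ u v, B u v = B v u) (hBpos : ∀ v, v ≠ 0 → 0 < B v v)
    (VH : Submodule ℝ V)
    (PH : V →ₗ[ℝ] V) (hPHmem : ∀ v, PH v ∈ VH)
    (hPHchar : ∀ v, ∀ w ∈ VH, m (v - PH v) w = 0)
    (Q : V →ₗ[ℝ] V)
    (hQmem : ∀ vH ∈ VH, PH (Q vH) = 0)
    (hQchar : ∀ vH ∈ VH, ∀ w, PH w = 0 → B (Q vH) w = - B vH w) :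
    IsCompl (Submodule.map (LinearMap.id + Q) VH) (LinearMap.ker PH) ∧
      ∀ u ∈ Submodule.map (LinearMap.id + Q) VH, ∀ w ∈ LinearMap.ker PH, B u w = 0 := by
  have hfix : ∀ v ∈ VH, PH v = v := by
    intro v hv
    have h0 := hPHchar v (v - PH v) (Submodule.sub_mem _ hv (hPHmem v))
    by_contra hne
    have hne' : v - PH v ≠ 0 := fun h => hne (by rw [sub_eq_zero] at h; exact h.symm)
    exact absurd h0 (ne_of_gt (hmpos _ hne'))
  have horth : ∀ u ∈ Submodule.map (LinearMap.id + Q) VH,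
      ∀ w ∈ LinearMap.ker PH, B u w = 0 := by
    rintro u ⟨vH, hvH, rfl⟩ w hw
    simp only [LinearMap.add_apply, LinearMap.id_apply, map_add]
    rw [hQchar vH hvH w (LinearMap.mem_ker.mp hw)]
    ring
  refine ⟨⟨?_, ?_⟩, horth⟩
  · rw [Submodule.disjoint_def]
    intro u hu hw
    by_contra hne
    exact absurd (horth u hu u hw) (ne_of_gt (hBpos u hne))
  · rw [codisjoint_iff, eq_top_iff]
    intro v _
    have h1 : ((LinearMap.id + Q : V →ₗ[ℝ] V) (PH v)) ∈ Submodule.map (LinearMap.id + Q) VH :=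
      Submodule.mem_map_of_mem (hPHmem v)
    have h2 : v - ((LinearMap.id + Q : V →ₗ[ℝ] V) (PH v)) ∈ LinearMap.ker PH := by
      simp only [LinearMap.mem_ker, map_sub, LinearMap.add_apply, LinearMap.id_apply, map_add]
      rw [hfix (PH v) (hPHmem v), hQmem (PH v) (hPHmem v)]
      abel
    have := Submodule.add_mem_sup h1 h2
    simpa using this
end

section
/- Let a ∈ M(α,β,Ω), F ∈ L²(Ω), and let z ∈ H¹₀(Ω) solve ∫_Ω a∇z·∇v = ∫_Ω F v for all v ∈ H¹₀(Ω). Let P_H : H¹₀(Ω) → V_H be the L²-orthogonal projection onto a finite-dimensional subspace V_H, and let −Q : V_H → W := ker(P_H) be the (a∇·,∇·)-orthogonal projection into W. Then P_H(z) is the unique solution of the Petrov–Galerkin problem: ∫_Ω a∇P_H(z)·∇(Id+Q)(v_H) = ∫_Ω F·(Id+Q)(v_H) for all v_H ∈ V_H. -/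
/-- Petrov–Galerkin characterization of the `L²`-projection.  `X = H¹₀(Ω)`
(with the energy-equivalent norm), `m` is the `L²` inner product, `B(u,v) = ∫_Ω a∇u·∇v`
is the symmetric bounded coercive energy form, `ℓ(v) = ∫_Ω F v`, and `z` solves
`B(z,v) = ℓ(v)` for all `v`.  `P_H` is the `L²`-orthogonal projection onto the
finite-dimensional subspace `V_H`, `W = ker P_H`, and `−Q` is the `B`-orthogonal
projection of `V_H` into `W`, i.e. `B(Q v_H, w) = −B(v_H, w)` for all `w ∈ W` and
`Q v_H ∈ W`.  Then `P_H z` is the unique solution of the Petrov–Galerkin problem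
`B(z_H, (Id+Q)v_H) = ℓ((Id+Q)v_H)` for all `v_H ∈ V_H`. -/
theorem stmt4 {X : Type*} [NormedAddCommGroup X] [InnerProductSpace ℝ X] [CompleteSpace X]
    (α : ℝ) (hα : 0 < α)
    (m : X →L[ℝ] X →L[ℝ] ℝ)
    (hmsym : ∀ u v, m u v = m v u) (hmpos : ∀ v, v ≠ 0 → 0 < m v v)
    (B : X →L[ℝ] X →L[ℝ] ℝ)
    (hBsym : ∀ u v, B u v = B v u) (hBcoer : ∀ v, α * ‖v‖ ^ 2 ≤ B v v)
    (ℓ : X →L[ℝ] ℝ) (z : X) (hz : ∀ v, B z v = ℓ v)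
    (VH : Submodule ℝ X) [FiniteDimensional ℝ VH]
    (PH : X →ₗ[ℝ] X) (hPHmem : ∀ v, PH v ∈ VH)
    (hPHchar : ∀ v, ∀ w ∈ VH, m (v - PH v) w = 0)
    (Q : X →ₗ[ℝ] X)
    (hQmem : ∀ vH ∈ VH, PH (Q vH) = 0)
    (hQchar : ∀ vH ∈ VH, ∀ w, PH w = 0 → B (Q vH) w = - B vH w) :
    (∀ vH ∈ VH, B (PH z) (vH + Q vH) = ℓ (vH + Q vH)) ∧
      ∀ zH ∈ VH, (∀ vH ∈ VH, B zH (vH + Q vH) = ℓ (vH + Q vH)) → zH = PH z := by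
  -- PH fixes elements of VH
  have hfix : ∀ v ∈ VH, PH v = v := by
    intro v hv
    have h := hPHchar v (v - PH v) (VH.sub_mem hv (hPHmem v))
    have hz0 : v - PH v = 0 := by
      by_contra hne
      exact absurd h (ne_of_gt (hmpos _ hne))
    have := sub_eq_zero.mp hz0
    exact this.symm
  -- the residual z - PH z is in the kernel of PH
  have hker : PH (z - PH z) = 0 := by
    rw [map_sub, hfix (PH z) (hPHmem z), sub_self]
  -- key orthogonality: B (z - PH z) (vH + Q vH) = 0 for vH ∈ VH
  have horth : ∀ vH ∈ VH, B (z - PH z) (vH + Q vH) = 0 := by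
    intro vH hvH
    have h1 : B (z - PH z) (vH + Q vH)
        = B vH (z - PH z) + B (Q vH) (z - PH z) := by
      rw [map_add, hBsym (z - PH z) vH, hBsym (z - PH z) (Q vH)]
    rw [h1, hQchar vH hvH (z - PH z) hker]
    ring
  have hmain : ∀ vH ∈ VH, B (PH z) (vH + Q vH) = ℓ (vH + Q vH) := by
    intro vH hvH
    have h2 : B (PH z) (vH + Q vH)
        = B z (vH + Q vH) - B (z - PH z) (vH + Q vH) := by
      rw [map_sub, ContinuousLinearMap.sub_apply]
      ring
    rw [h2, horth vH hvH, hz (vH + Q vH)]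
    ring
  refine ⟨hmain, ?_⟩
  intro zH hzH hsol
  set e := zH - PH z with he
  have heVH : e ∈ VH := VH.sub_mem hzH (hPHmem z)
  have hBe : B e (e + Q e) = 0 := by
    have h3 : B e (e + Q e) = B zH (e + Q e) - B (PH z) (e + Q e) := by
      rw [he, map_sub, ContinuousLinearMap.sub_apply]
    rw [h3, hsol e heVH, hmain e heVH, sub_self]
  have hkerQe : PH (Q e) = 0 := hQmem e heVH
  have hBQe : B (Q e) (e + Q e) = 0 := by
    have h4 : B (Q e) (e + Q e) = B e (Q e) + B (Q e) (Q e) := by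
      simp only [map_add]
      rw [hBsym (Q e) e]
    rw [h4, hQchar e heVH (Q e) hkerQe, hBsym e (Q e)]
    ring
  have hsum : B (e + Q e) (e + Q e) = 0 := by
    simp only [map_add, ContinuousLinearMap.add_apply] at hBe hBQe ⊢
    linarith [hBe, hBQe]
  have hnz : e + Q e = 0 := by
    by_contra hne
    have hnorm : 0 < ‖e + Q e‖ ^ 2 := by
      have := norm_pos_iff.mpr hne
      positivity
    have := hBcoer (e + Q e)
    rw [hsum] at this
    nlinarith
  have heq : e = - Q e := eq_neg_of_add_eq_zero_left hnz
  have hPHe : PH e = 0 := by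
    rw [heq, map_neg, hkerQe, neg_zero]
  have he0 : e = 0 := by rw [← hfix e heVH, hPHe]
  exact sub_eq_zero.mp he0
end

section
/- Let a : ℝ^d → ℝ^{d×d} be Y-periodic, symmetric, with uniform spectral bounds α, β, and let χ_j ∈ H¹_per(Y), j = 1,…,d, solve the cell problems ∫_Y a(y)(∇χ_j(y)+e_j)·∇w(y) dy = 0 for all w ∈ H¹_per(Y). Define a⁰_{ij} = (1/|Y|)∫_Y e_iᵀ a(y)(∇χ_j(y)+e_j) dy. Then the homogenized tensor a⁰ is symmetric and satisfies the same type of spectral bounds: there exist 0 < α ≤ α' ≤ β' ≤ β with α'|ξ|² ≤ a⁰ξ·ξ ≤ β'|ξ|² for all ξ ∈ ℝ^d; in particular a⁰ξ·ξ = (1/|Y|)∫_Y a(∇χ_ξ + ξ)·(∇χ_ξ + ξ) dy ≥ α|ξ|² where χ_ξ = Σ_j ξ_j χ_j. -/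
/-!
Testing the cell problem for `χ_j` with `w = χ_i` turns `a⁰ᵢⱼ` into the energy pairing
`∫ a(∇χ_j + e_j)·(∇χ_i + e_i)`, which is symmetric, and `a⁰ξ·ξ = ∫ aQ·Q` for
`Q = ∇χ_ξ + ξ`. Gradients of periodic functions have mean zero over the cell (divergence
theorem on the cube: opposite faces cancel), so `∫ Q = ξ` and Jensen's inequality gives
`a⁰ξ·ξ ≥ α ∫ |Q|² ≥ α |ξ|²`. Testing with `χ_ξ` gives `∫ aQ·∇χ_ξ = 0`, hence
`a⁰ξ·ξ = ∫ aξ·ξ - ∫ a∇χ_ξ·∇χ_ξ ≤ β |ξ|²`. All integrability side conditions follow from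
coercivity: a field of integrable energy is square integrable.
-/

open MeasureTheory Matrix Set

namespace Matrix

variable {ι κ : Type*} [Fintype ι] {A : Matrix ι ι ℝ}

theorem IsSymm.dotProduct_mulVec_comm (hA : A.IsSymm) (u v : ι → ℝ) :
    u ⬝ᵥ A *ᵥ v = v ⬝ᵥ A *ᵥ u := by
  rw [dotProduct_mulVec, ← mulVec_transpose, hA.eq, dotProduct_comm]

theorem IsSymm.abs_dotProduct_mulVec_le {β : ℝ} (hA : A.IsSymm) (hpos : ∀ x, 0 ≤ x ⬝ᵥ A *ᵥ x)
    (hle : ∀ x, x ⬝ᵥ A *ᵥ x ≤ β * ∑ i, x i ^ 2) (u v : ι → ℝ) :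
    |u ⬝ᵥ A *ᵥ v| ≤ β / 2 * (∑ i, u i ^ 2 + ∑ i, v i ^ 2) := by
  have hpolar : 4 * (u ⬝ᵥ A *ᵥ v) = (u + v) ⬝ᵥ A *ᵥ (u + v) - (u - v) ⬝ᵥ A *ᵥ (u - v) := by
    simp only [mulVec_add, mulVec_sub, dotProduct_add, add_dotProduct, dotProduct_sub,
      sub_dotProduct, hA.dotProduct_mulVec_comm v u]
    ring
  have hparallelogram : β * ∑ i, (u + v) i ^ 2 + β * ∑ i, (u - v) i ^ 2
      = 2 * β * (∑ i, u i ^ 2 + ∑ i, v i ^ 2) := by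
    simp only [Pi.add_apply, Pi.sub_apply, ← mul_add, ← Finset.sum_add_distrib, Finset.mul_sum]
    exact Finset.sum_congr rfl fun i _ => by ring
  have := hpos (u + v); have := hpos (u - v); have := hle (u + v); have := hle (u - v)
  rw [abs_le]
  constructor <;> linarith

theorem IsSymm.mulVec_add_dotProduct_add_le (hA : A.IsSymm) {g : ι → ℝ} (hg : 0 ≤ g ⬝ᵥ A *ᵥ g)
    (x : ι → ℝ) : A *ᵥ (g + x) ⬝ᵥ (g + x) ≤ x ⬝ᵥ A *ᵥ x + 2 * (A *ᵥ (g + x) ⬝ᵥ g) := by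
  have := hA.dotProduct_mulVec_comm g x
  simp only [mulVec_add, add_dotProduct, dotProduct_add, dotProduct_comm (A *ᵥ _)]
  linarith

variable [Fintype κ]

theorem mulVec_sum_smul_dotProduct_sum_smul (A : Matrix ι ι ℝ) (ξ η : κ → ℝ)
    (u v : κ → ι → ℝ) :
    A *ᵥ (∑ j, ξ j • u j) ⬝ᵥ ∑ i, η i • v i = ∑ i, ∑ j, η i * ξ j * (A *ᵥ u j ⬝ᵥ v i) := by
  simp only [mulVec_sum, mulVec_smul, sum_dotProduct, dotProduct_sum, smul_dotProduct,
    dotProduct_smul, smul_eq_mul, Finset.mul_sum]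
  exact Finset.sum_congr rfl fun i _ => Finset.sum_congr rfl fun j _ => by ring

theorem dotProduct_mulVec_self_eq_sum (M : Matrix κ κ ℝ) (ξ : κ → ℝ) :
    ξ ⬝ᵥ M *ᵥ ξ = ∑ i, ∑ j, ξ i * ξ j * M i j := by
  simp only [dotProduct, mulVec, Finset.mul_sum]
  exact Finset.sum_congr rfl fun i _ => Finset.sum_congr rfl fun j _ => by ring

end Matrix

theorem sum_smul_add_single {ι R : Type*} [Fintype ι] [DecidableEq ι] [NonAssocSemiring R]
    (ξ : ι → R) (u : ι → ι → R) :
    ∑ j, ξ j • (u j + Pi.single j 1) = ∑ j, ξ j • u j + ξ := by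
  simp only [smul_add, Finset.sum_add_distrib, ← pi_eq_sum_univ' ξ]

theorem sq_integral_le_integral_sq {Ω : Type*} [MeasurableSpace Ω] {μ : Measure Ω}
    [IsProbabilityMeasure μ] {f : Ω → ℝ} (hf : MemLp f 2 μ) :
    (∫ y, f y ∂μ) ^ 2 ≤ ∫ y, f y ^ 2 ∂μ := by
  have := ProbabilityTheory.variance_nonneg f μ
  rw [ProbabilityTheory.variance_eq_sub hf] at this
  simpa using this

section Energy

variable {Ω ι κ : Type*} [MeasurableSpace Ω] [Fintype ι] [Fintype κ] {μ : Measure Ω}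
  {a : Ω → Matrix ι ι ℝ} {α β : ℝ}

theorem integrable_sum_sq_of_integrable_energy (hα : 0 < α)
    (hcoer : ∀ y x, α * ∑ i, x i ^ 2 ≤ x ⬝ᵥ a y *ᵥ x) {u : Ω → ι → ℝ}
    (hu : ∀ i, Measurable fun y => u y i) (hE : Integrable (fun y => a y *ᵥ u y ⬝ᵥ u y) μ) :
    Integrable (fun y => ∑ i, u y i ^ 2) μ := by
  refine (hE.const_mul α⁻¹).mono' (by fun_prop) (ae_of_all _ fun y => ?_)
  rw [Real.norm_of_nonneg (by positivity), dotProduct_comm, le_inv_mul_iff₀ hα]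
  exact hcoer y (u y)

theorem memLp_two_of_integrable_sum_sq {u : Ω → ι → ℝ} (hu : ∀ i, Measurable fun y => u y i)
    (hsq : Integrable (fun y => ∑ i, u y i ^ 2) μ) (l : ι) : MemLp (fun y => u y l) 2 μ := by
  refine (memLp_two_iff_integrable_sq (hu l).aestronglyMeasurable).2
    (hsq.mono' (by fun_prop) (ae_of_all _ fun y => ?_))
  rw [Real.norm_of_nonneg (sq_nonneg _)]
  exact Finset.single_le_sum (f := fun i => u y i ^ 2) (fun i _ => sq_nonneg _) (Finset.mem_univ l)

theorem integrable_mulVec_dotProduct (ha : ∀ i j, Measurable fun y => a y i j)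
    (hsym : ∀ y, (a y).IsSymm) (hpos : ∀ y x, 0 ≤ x ⬝ᵥ a y *ᵥ x)
    (hle : ∀ y x, x ⬝ᵥ a y *ᵥ x ≤ β * ∑ i, x i ^ 2) {u v : Ω → ι → ℝ}
    (hu : ∀ i, Measurable fun y => u y i) (hv : ∀ i, Measurable fun y => v y i)
    (hu2 : Integrable (fun y => ∑ i, u y i ^ 2) μ) (hv2 : Integrable (fun y => ∑ i, v y i ^ 2) μ) :
    Integrable (fun y => a y *ᵥ u y ⬝ᵥ v y) μ := by
  refine ((hv2.add hu2).const_mul (β / 2)).mono' ?_ (ae_of_all _ fun y => ?_)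
  · simp only [dotProduct, mulVec]
    fun_prop
  · rw [Real.norm_eq_abs, dotProduct_comm]
    exact (hsym y).abs_dotProduct_mulVec_le (hpos y) (hle y) _ _

theorem integrable_mulVec_sum_smul_dotProduct_sum_smul (ξ η : κ → ℝ) {u v : κ → Ω → ι → ℝ}
    (h : ∀ i j, Integrable (fun y => a y *ᵥ u j y ⬝ᵥ v i y) μ) :
    Integrable (fun y => a y *ᵥ (∑ j, ξ j • u j y) ⬝ᵥ ∑ i, η i • v i y) μ := by
  simp only [mulVec_sum_smul_dotProduct_sum_smul]
  exact integrable_finsetSum _ fun i _ => integrable_finsetSum _ fun j _ => (h i j).const_mul _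

theorem integral_mulVec_sum_smul_dotProduct_sum_smul (ξ η : κ → ℝ) {u v : κ → Ω → ι → ℝ}
    (h : ∀ i j, Integrable (fun y => a y *ᵥ u j y ⬝ᵥ v i y) μ) :
    ∫ y, a y *ᵥ (∑ j, ξ j • u j y) ⬝ᵥ ∑ i, η i • v i y ∂μ
      = ∑ i, ∑ j, η i * ξ j * ∫ y, a y *ᵥ u j y ⬝ᵥ v i y ∂μ := by
  simp only [mulVec_sum_smul_dotProduct_sum_smul]
  rw [integral_finsetSum _ fun i _ => integrable_finsetSum _ fun j _ => (h i j).const_mul _]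
  refine Finset.sum_congr rfl fun i _ => ?_
  rw [integral_finsetSum _ fun j _ => (h i j).const_mul _]
  exact Finset.sum_congr rfl fun j _ => integral_const_mul _ _

theorem mul_sum_sq_integral_le_integral_energy [IsProbabilityMeasure μ] (hα : 0 ≤ α)
    (hcoer : ∀ y x, α * ∑ i, x i ^ 2 ≤ x ⬝ᵥ a y *ᵥ x) {Q : Ω → ι → ℝ}
    (hQ : ∀ i, MemLp (fun y => Q y i) 2 μ) (hE : Integrable (fun y => a y *ᵥ Q y ⬝ᵥ Q y) μ) :
    α * ∑ i, (∫ y, Q y i ∂μ) ^ 2 ≤ ∫ y, a y *ᵥ Q y ⬝ᵥ Q y ∂μ := by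
  have hsq : ∀ i, Integrable (fun y => Q y i ^ 2) μ := fun i => (hQ i).integrable_sq
  calc α * ∑ i, (∫ y, Q y i ∂μ) ^ 2
      ≤ α * ∑ i, ∫ y, Q y i ^ 2 ∂μ := by
        gcongr with i
        exact sq_integral_le_integral_sq (hQ i)
    _ = ∫ y, α * ∑ i, Q y i ^ 2 ∂μ := by
        rw [integral_const_mul, integral_finsetSum _ fun i _ => hsq i]
    _ ≤ ∫ y, a y *ᵥ Q y ⬝ᵥ Q y ∂μ :=
        integral_mono ((integrable_finsetSum _ fun i _ => hsq i).const_mul α) hE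
          fun y => (hcoer y (Q y)).trans_eq (dotProduct_comm _ _)

theorem integral_energy_le_of_integral_eq_zero [IsProbabilityMeasure μ]
    (hsym : ∀ y, (a y).IsSymm) (hpos : ∀ y x, 0 ≤ x ⬝ᵥ a y *ᵥ x)
    (hle : ∀ y x, x ⬝ᵥ a y *ᵥ x ≤ β * ∑ i, x i ^ 2) {g : Ω → ι → ℝ} (ξ : ι → ℝ)
    (hE : Integrable (fun y => a y *ᵥ (g y + ξ) ⬝ᵥ (g y + ξ)) μ)
    (hg : Integrable (fun y => a y *ᵥ (g y + ξ) ⬝ᵥ g y) μ)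
    (horth : ∫ y, a y *ᵥ (g y + ξ) ⬝ᵥ g y ∂μ = 0) :
    ∫ y, a y *ᵥ (g y + ξ) ⬝ᵥ (g y + ξ) ∂μ ≤ β * ∑ i, ξ i ^ 2 := by
  calc ∫ y, a y *ᵥ (g y + ξ) ⬝ᵥ (g y + ξ) ∂μ
      ≤ ∫ y, (β * ∑ i, ξ i ^ 2 + 2 * (a y *ᵥ (g y + ξ) ⬝ᵥ g y)) ∂μ :=
        integral_mono hE ((integrable_const _).add (hg.const_mul 2)) fun y =>
          ((hsym y).mulVec_add_dotProduct_add_le (hpos y (g y)) ξ).trans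
            (by gcongr; exact hle y ξ)
    _ = β * ∑ i, ξ i ^ 2 := by
        rw [integral_add (integrable_const _) (hg.const_mul 2), integral_const,
          integral_const_mul, horth]
        simp

end Energy

section CellProblem

variable {Ω ι : Type*} [MeasurableSpace Ω] [Fintype ι] [DecidableEq ι] {μ : Measure Ω}
  {a : Ω → Matrix ι ι ℝ} {α β : ℝ} {G : ι → Ω → ι → ℝ}

theorem integrable_apply_of_integrable_energy_add_single [IsFiniteMeasure μ] (hα : 0 < α)
    (hcoer : ∀ y x, α * ∑ i, x i ^ 2 ≤ x ⬝ᵥ a y *ᵥ x) (hG : ∀ j l, Measurable fun y => G j y l)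
    {j : ι}
    (hE : Integrable (fun y => a y *ᵥ (G j y + Pi.single j 1) ⬝ᵥ (G j y + Pi.single j 1)) μ)
    (l : ι) : Integrable (fun y => G j y l) μ := by
  have hP : ∀ l, Measurable fun y => (G j y + Pi.single j 1 : ι → ℝ) l := fun l =>
    (hG j l).add_const _
  have hPl := (memLp_two_of_integrable_sum_sq hP
    (integrable_sum_sq_of_integrable_energy hα hcoer hP hE) l).integrable one_le_two
  exact (hPl.sub (integrable_const _)).congr (ae_of_all _ fun y => add_sub_cancel_right _ _)

theorem integrable_mulVec_add_single_dotProduct [IsFiniteMeasure μ] (hα : 0 < α)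
    (ha : ∀ i j, Measurable fun y => a y i j) (hsym : ∀ y, (a y).IsSymm)
    (hcoer : ∀ y x, α * ∑ i, x i ^ 2 ≤ x ⬝ᵥ a y *ᵥ x)
    (hle : ∀ y x, x ⬝ᵥ a y *ᵥ x ≤ β * ∑ i, x i ^ 2) (hG : ∀ j l, Measurable fun y => G j y l)
    (hInt : ∀ i j, Integrable (fun y =>
      a y *ᵥ (G i y + Pi.single i 1) ⬝ᵥ (G j y + Pi.single j 1)) μ) (i j : ι) :
    Integrable (fun y => a y *ᵥ (G j y + Pi.single j 1) ⬝ᵥ Pi.single i 1) μ ∧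
      Integrable (fun y => a y *ᵥ (G j y + Pi.single j 1) ⬝ᵥ G i y) μ := by
  have hP : ∀ l, Measurable fun y => (G j y + Pi.single j 1 : ι → ℝ) l := fun l =>
    (hG j l).add_const _
  have hsingle := integrable_mulVec_dotProduct (v := fun _ => Pi.single i 1) ha hsym
    (fun y x => (mul_nonneg hα.le (by positivity)).trans (hcoer y x)) hle hP
    (fun _ => measurable_const) (integrable_sum_sq_of_integrable_energy hα hcoer hP (hInt j j))
    (integrable_const (∑ l, (Pi.single i 1 : ι → ℝ) l ^ 2))
  refine ⟨hsingle, ((hInt j i).sub hsingle).congr (ae_of_all _ fun y => ?_)⟩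
  simp only [Pi.sub_apply, dotProduct_add, add_sub_cancel_right]

theorem dotProduct_mulVec_eq_integral_energy {a0 : Matrix ι ι ℝ}
    (hInt : ∀ i j, Integrable (fun y =>
      a y *ᵥ (G i y + Pi.single i 1) ⬝ᵥ (G j y + Pi.single j 1)) μ)
    (hentry : ∀ i j, a0 i j =
      ∫ y, a y *ᵥ (G j y + Pi.single j 1) ⬝ᵥ (G i y + Pi.single i 1) ∂μ) (ξ : ι → ℝ) :
    ξ ⬝ᵥ a0 *ᵥ ξ = ∫ y, a y *ᵥ (∑ j, ξ j • G j y + ξ) ⬝ᵥ (∑ j, ξ j • G j y + ξ) ∂μ := by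
  have := integral_mulVec_sum_smul_dotProduct_sum_smul ξ ξ fun i j => hInt j i
  simp only [sum_smul_add_single] at this
  rw [this, dotProduct_mulVec_self_eq_sum]
  simp only [hentry]

theorem mul_sum_sq_le_integral_energy [IsProbabilityMeasure μ] (hα : 0 < α)
    (hcoer : ∀ y x, α * ∑ i, x i ^ 2 ≤ x ⬝ᵥ a y *ᵥ x) (hG : ∀ j l, Measurable fun y => G j y l)
    (hInt : ∀ i j, Integrable (fun y =>
      a y *ᵥ (G i y + Pi.single i 1) ⬝ᵥ (G j y + Pi.single j 1)) μ)
    (hmean : ∀ j l, ∫ y, G j y l ∂μ = 0) (ξ : ι → ℝ) :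
    α * ∑ i, ξ i ^ 2 ≤ ∫ y, a y *ᵥ (∑ j, ξ j • G j y + ξ) ⬝ᵥ (∑ j, ξ j • G j y + ξ) ∂μ := by
  have hE := integrable_mulVec_sum_smul_dotProduct_sum_smul ξ ξ fun i j => hInt j i
  simp only [sum_smul_add_single] at hE
  have hQ : ∀ l, Measurable fun y => (∑ j, ξ j • G j y + ξ) l := fun l => by
    simp only [Pi.add_apply, Finset.sum_apply, Pi.smul_apply, smul_eq_mul]
    fun_prop
  have hGl : ∀ j l, Integrable (fun y => G j y l) μ := fun j l =>
    integrable_apply_of_integrable_energy_add_single hα hcoer hG (hInt j j) l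
  have hmeanQ : ∀ l, ∫ y, (∑ j, ξ j • G j y + ξ) l ∂μ = ξ l := fun l => by
    simp only [Pi.add_apply, Finset.sum_apply, Pi.smul_apply, smul_eq_mul]
    rw [integral_add (integrable_finsetSum _ fun j _ => (hGl j l).const_mul _)
      (integrable_const _), integral_finsetSum _ fun j _ => (hGl j l).const_mul _]
    simp [integral_const_mul, hmean]
  calc α * ∑ i, ξ i ^ 2 = α * ∑ i, (∫ y, (∑ j, ξ j • G j y + ξ) i ∂μ) ^ 2 := by
        simp only [hmeanQ]
    _ ≤ _ := mul_sum_sq_integral_le_integral_energy hα.le hcoer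
        (memLp_two_of_integrable_sum_sq hQ (integrable_sum_sq_of_integrable_energy hα hcoer hQ hE))
        hE

theorem integral_energy_le_mul_sum_sq [IsProbabilityMeasure μ] (hsym : ∀ y, (a y).IsSymm)
    (hpos : ∀ y x, 0 ≤ x ⬝ᵥ a y *ᵥ x) (hle : ∀ y x, x ⬝ᵥ a y *ᵥ x ≤ β * ∑ i, x i ^ 2)
    (hInt : ∀ i j, Integrable (fun y =>
      a y *ᵥ (G i y + Pi.single i 1) ⬝ᵥ (G j y + Pi.single j 1)) μ)
    (hPG : ∀ i j, Integrable (fun y => a y *ᵥ (G j y + Pi.single j 1) ⬝ᵥ G i y) μ)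
    (horth : ∀ i j, ∫ y, a y *ᵥ (G j y + Pi.single j 1) ⬝ᵥ G i y ∂μ = 0) (ξ : ι → ℝ) :
    ∫ y, a y *ᵥ (∑ j, ξ j • G j y + ξ) ⬝ᵥ (∑ j, ξ j • G j y + ξ) ∂μ ≤ β * ∑ i, ξ i ^ 2 := by
  have hE := integrable_mulVec_sum_smul_dotProduct_sum_smul ξ ξ fun i j => hInt j i
  have hg := integrable_mulVec_sum_smul_dotProduct_sum_smul ξ ξ hPG
  have hg0 := integral_mulVec_sum_smul_dotProduct_sum_smul ξ ξ hPG
  simp only [sum_smul_add_single, horth, mul_zero, Finset.sum_const_zero] at hE hg hg0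
  exact integral_energy_le_of_integral_eq_zero hsym hpos hle ξ hE hg hg0

/-- `G j` plays the role of `∇χ_j`; periodicity and the cell problem enter through `hmean` and
`horth`. -/
theorem symm_and_spectral_bounds_of_cell_problem [IsProbabilityMeasure μ] (hα : 0 < α)
    (hαβ : α ≤ β) (ha : ∀ i j, Measurable fun y => a y i j) (hsym : ∀ y, (a y).IsSymm)
    (hbd : ∀ y x, α * ∑ i, x i ^ 2 ≤ x ⬝ᵥ a y *ᵥ x ∧ x ⬝ᵥ a y *ᵥ x ≤ β * ∑ i, x i ^ 2)
    (hG : ∀ j l, Measurable fun y => G j y l)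
    (hInt : ∀ i j, Integrable (fun y =>
      a y *ᵥ (G i y + Pi.single i 1) ⬝ᵥ (G j y + Pi.single j 1)) μ)
    (hmean : ∀ j l, Integrable (fun y => G j y l) μ → ∫ y, G j y l ∂μ = 0)
    (horth : ∀ i j, Integrable (fun y => a y *ᵥ (G j y + Pi.single j 1) ⬝ᵥ G i y) μ →
      ∫ y, a y *ᵥ (G j y + Pi.single j 1) ⬝ᵥ G i y ∂μ = 0)
    (a0 : Matrix ι ι ℝ)
    (ha0 : ∀ i j, a0 i j = ∫ y, Pi.single i 1 ⬝ᵥ a y *ᵥ (G j y + Pi.single j 1) ∂μ) :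
    (∀ i j, a0 i j = a0 j i) ∧
    (∃ α' β' : ℝ, α ≤ α' ∧ α' ≤ β' ∧ β' ≤ β ∧
      ∀ ξ : ι → ℝ, α' * (∑ i, ξ i ^ 2) ≤ ξ ⬝ᵥ a0 *ᵥ ξ ∧ ξ ⬝ᵥ a0 *ᵥ ξ ≤ β' * ∑ i, ξ i ^ 2) ∧
    (∀ ξ : ι → ℝ,
      ξ ⬝ᵥ a0 *ᵥ ξ = ∫ y, a y *ᵥ (fun l => (∑ j, ξ j * G j y l) + ξ l) ⬝ᵥ
            (fun l => (∑ j, ξ j * G j y l) + ξ l) ∂μ ∧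
        α * (∑ i, ξ i ^ 2) ≤ ξ ⬝ᵥ a0 *ᵥ ξ) := by
  have hcoer : ∀ y x, α * ∑ i, x i ^ 2 ≤ x ⬝ᵥ a y *ᵥ x := fun y x => (hbd y x).1
  have hle : ∀ y x, x ⬝ᵥ a y *ᵥ x ≤ β * ∑ i, x i ^ 2 := fun y x => (hbd y x).2
  have hpos : ∀ y x, 0 ≤ x ⬝ᵥ a y *ᵥ x := fun y x =>
    (mul_nonneg hα.le (by positivity)).trans (hcoer y x)
  have hPI := integrable_mulVec_add_single_dotProduct hα ha hsym hcoer hle hG hInt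
  have horth' : ∀ i j, ∫ y, a y *ᵥ (G j y + Pi.single j 1) ⬝ᵥ G i y ∂μ = 0 := fun i j =>
    horth i j (hPI i j).2
  have hentry : ∀ i j, a0 i j =
      ∫ y, a y *ᵥ (G j y + Pi.single j 1) ⬝ᵥ (G i y + Pi.single i 1) ∂μ := fun i j => by
    simp only [ha0, dotProduct_add, integral_add (hPI i j).2 (hPI i j).1, horth', zero_add]
    exact integral_congr_ae (ae_of_all _ fun y => dotProduct_comm _ _)
  have hform := dotProduct_mulVec_eq_integral_energy hInt hentry
  have hlow := mul_sum_sq_le_integral_energy hα hcoer hG hInt fun j l =>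
    hmean j l (integrable_apply_of_integrable_energy_add_single hα hcoer hG (hInt j j) l)
  have hup := integral_energy_le_mul_sum_sq hsym hpos hle hInt (fun i j => (hPI i j).2) horth'
  have hQ : ∀ (ξ : ι → ℝ) y, ∑ j, ξ j • G j y + ξ = fun l => (∑ j, ξ j * G j y l) + ξ l :=
    fun ξ y => by ext l; simp [Finset.sum_apply]
  refine ⟨fun i j => ?_, ⟨α, β, le_rfl, hαβ, le_rfl, fun ξ => ?_⟩, fun ξ => ?_⟩
  · simp only [hentry, (hsym _).dotProduct_mulVec_comm, dotProduct_comm (a _ *ᵥ _)]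
  · exact ⟨(hlow ξ).trans_eq (hform ξ).symm, (hform ξ).trans_le (hup ξ)⟩
  · simp only [← hQ]
    exact ⟨hform ξ, (hlow ξ).trans_eq (hform ξ).symm⟩

end CellProblem

theorem Fin.insertNth_add_single {n : ℕ} {M : Type*} [AddZeroClass M] (l : Fin (n + 1))
    (s t : M) (x : Fin n → M) :
    l.insertNth (s + t) x = l.insertNth s x + Pi.single (M := fun _ => M) l t := by
  ext j
  induction j using l.succAboveCases <;> simp

theorem integral_Icc_fderiv_single_eq_zero_of_periodic {n : ℕ} {F : (Fin (n + 1) → ℝ) → ℝ}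
    {F' : (Fin (n + 1) → ℝ) → (Fin (n + 1) → ℝ) →L[ℝ] ℝ} (l : Fin (n + 1))
    (hF : ∀ x, HasFDerivAt F (F' x) x) (hper : ∀ x, F (x + Pi.single l 1) = F x)
    (hint : IntegrableOn (fun x => F' x (Pi.single l 1)) (Icc 0 1)) :
    ∫ x in Icc 0 1, F' x (Pi.single l 1) = 0 := by
  set f : Fin (n + 1) → (Fin (n + 1) → ℝ) → ℝ := Pi.single l F
  set f' : Fin (n + 1) → (Fin (n + 1) → ℝ) → (Fin (n + 1) → ℝ) →L[ℝ] ℝ := Pi.single l F'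
  have hdiv := integral_divergence_of_hasFDerivAt_off_countable' 0 1 zero_le_one f f' ∅
    countable_empty
    (fun i => by
      rcases eq_or_ne i l with rfl | hi
      · simp only [f, Pi.single_eq_same]
        exact fun x _ => (hF x).continuousAt.continuousWithinAt
      · simp only [f, Pi.single_eq_of_ne hi]
        exact continuousOn_const)
    (fun x _ i => by
      rcases eq_or_ne i l with rfl | hi
      · simpa [f, f'] using hF x
      · simp only [f, f', Pi.single_eq_of_ne hi]
        exact hasFDerivAt_const 0 x)
  have hdivergence : ∀ x, ∑ i, f' i x (Pi.single i 1) = F' x (Pi.single l 1) := fun x => by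
    rw [Finset.sum_eq_single l (fun i _ hi => by simp [f', Pi.single_eq_of_ne hi]) (by simp)]
    simp [f']
  simp only [hdivergence] at hdiv
  rw [hdiv hint, Finset.sum_eq_single l (fun i _ hi => by simp [f, Pi.single_eq_of_ne hi])
    (by simp)]
  simp only [f, Pi.single_eq_same]
  rw [show (1 : Fin (n + 1) → ℝ) l = (0 : Fin (n + 1) → ℝ) l + 1 by simp]
  simp only [Fin.insertNth_add_single, hper, sub_self]

def unitCube (d : ℕ) : Set (EuclideanSpace ℝ (Fin d)) := {y | ∀ i, y i ∈ Ioo 0 1}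

theorem toLp_preimage_unitCube (d : ℕ) :
    WithLp.toLp 2 ⁻¹' unitCube d = univ.pi fun _ => Ioo 0 1 := by
  ext y
  simp [unitCube]

theorem volume_unitCube (d : ℕ) : volume (unitCube d) = 1 := by
  rw [← (PiLp.volume_preserving_toLp (Fin d)).measure_preimage_emb
    (MeasurableEquiv.toLp 2 (Fin d → ℝ)).measurableEmbedding, toLp_preimage_unitCube,
    volume_pi_pi]
  simp

theorem integral_unitCube_gradient_eq_zero {d : ℕ} {f : EuclideanSpace ℝ (Fin d) → ℝ}
    {g : EuclideanSpace ℝ (Fin d) → EuclideanSpace ℝ (Fin d)} (l : Fin d)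
    (hf : ∀ x, HasGradientAt f (g x) x) (hper : ∀ x, f (x + EuclideanSpace.single l 1) = f x)
    (hint : IntegrableOn (fun y => g y l) (unitCube d)) :
    ∫ y in unitCube d, g y l = 0 := by
  obtain ⟨n, rfl⟩ : ∃ n, d = n + 1 := Nat.exists_eq_add_one_of_ne_zero l.pos.ne'
  have hmp := PiLp.volume_preserving_toLp (Fin (n + 1))
  have hemb := (MeasurableEquiv.toLp 2 (Fin (n + 1) → ℝ)).measurableEmbedding
  have hIcc : (univ.pi fun _ => Ioo 0 1 : Set (Fin (n + 1) → ℝ)) =ᵐ[volume] Icc 0 1 :=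
    Measure.univ_pi_Ioo_ae_eq_Icc
  rw [← hmp.setIntegral_preimage_emb hemb, toLp_preimage_unitCube, setIntegral_congr_set hIcc]
  rw [← hmp.integrableOn_comp_preimage hemb, toLp_preimage_unitCube,
    integrableOn_congr_set_ae hIcc] at hint
  set L := (PiLp.continuousLinearEquiv 2 ℝ (fun _ : Fin (n + 1) => ℝ)).symm
  have hpartial : ∀ x, (InnerProductSpace.toDual ℝ _ (g (L x))).comp
      (L : (Fin (n + 1) → ℝ) →L[ℝ] _) (Pi.single l 1) = g (WithLp.toLp 2 x) l := fun x => by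
    simp [L, EuclideanSpace.inner_single_right]
  have := integral_Icc_fderiv_single_eq_zero_of_periodic (F := f ∘ L) l
    (fun x => (hf (L x)).hasFDerivAt.comp x L.hasFDerivAt) (fun x => ?_)
    (by simp only [hpartial]; exact hint)
  · simpa [hpartial] using this
  · simpa [L] using hper (L x)

theorem measurable_apply_of_hasGradientAt {ι : Type*} [Fintype ι] [DecidableEq ι]
    {f : EuclideanSpace ℝ ι → ℝ} {g : EuclideanSpace ℝ ι → EuclideanSpace ℝ ι}
    (hf : ∀ x, HasGradientAt f (g x) x) (l : ι) : Measurable fun y => g y l := by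
  have : (fun y => g y l) = fun y => fderiv ℝ f y (EuclideanSpace.single l 1) := funext fun y => by
    rw [(hf y).hasFDerivAt.fderiv]
    simp [EuclideanSpace.inner_single_right]
  rw [this]
  exact measurable_fderiv_apply_const ℝ f _

theorem stmt7_general {d : ℕ}
    (μ : Measure (EuclideanSpace ℝ (Fin d)))
    (hμ : μ = volume.restrict {y : EuclideanSpace ℝ (Fin d) | ∀ i, y i ∈ Set.Ioo (0:ℝ) 1})
    (α β : ℝ) (hα : 0 < α) (hαβ : α ≤ β)
    (a : EuclideanSpace ℝ (Fin d) → Matrix (Fin d) (Fin d) ℝ)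
    (hameas : ∀ i j, Measurable fun y => a y i j)
    (hsym : ∀ y, (a y).IsSymm)
    (hbd : ∀ y, ∀ ξ : Fin d → ℝ, α * (∑ i, ξ i ^ 2) ≤ ξ ⬝ᵥ (a y).mulVec ξ ∧
      ξ ⬝ᵥ (a y).mulVec ξ ≤ β * ∑ i, ξ i ^ 2)
    (χ : Fin d → EuclideanSpace ℝ (Fin d) → ℝ)
    (gχ : Fin d → EuclideanSpace ℝ (Fin d) → EuclideanSpace ℝ (Fin d))
    (hgrad : ∀ j x, HasGradientAt (χ j) (gχ j x) x)
    (hχper : ∀ j x i, χ j (x + EuclideanSpace.single i 1) = χ j x)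
    (hInt : ∀ i j, Integrable (fun y =>
      ((a y).mulVec (fun l => gχ i y l + (Pi.single i 1 : Fin d → ℝ) l)) ⬝ᵥ
        (fun l => gχ j y l + (Pi.single j 1 : Fin d → ℝ) l)) μ)
    (hcell : ∀ j, ∀ (w : EuclideanSpace ℝ (Fin d) → ℝ)
        (gw : EuclideanSpace ℝ (Fin d) → EuclideanSpace ℝ (Fin d)),
      (∀ x, HasGradientAt w (gw x) x) →
      (∀ x i, w (x + EuclideanSpace.single i 1) = w x) →
      Integrable (fun y =>
        ((a y).mulVec (fun l => gχ j y l + (Pi.single j 1 : Fin d → ℝ) l)) ⬝ᵥ (fun l => gw y l)) μ →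
      ∫ y, ((a y).mulVec (fun l => gχ j y l + (Pi.single j 1 : Fin d → ℝ) l)) ⬝ᵥ (fun l => gw y l) ∂μ = 0)
    (a0 : Matrix (Fin d) (Fin d) ℝ)
    (ha0 : ∀ i j, a0 i j = ∫ y,
      (Pi.single i 1 : Fin d → ℝ) ⬝ᵥ ((a y).mulVec (fun l => gχ j y l + (Pi.single j 1 : Fin d → ℝ) l)) ∂μ) :
    (∀ i j, a0 i j = a0 j i) ∧
    (∃ α' β' : ℝ, α ≤ α' ∧ α' ≤ β' ∧ β' ≤ β ∧
      ∀ ξ : Fin d → ℝ, α' * (∑ i, ξ i ^ 2) ≤ ξ ⬝ᵥ a0.mulVec ξ ∧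
        ξ ⬝ᵥ a0.mulVec ξ ≤ β' * ∑ i, ξ i ^ 2) ∧
    (∀ ξ : Fin d → ℝ,
      ξ ⬝ᵥ a0.mulVec ξ = ∫ y,
          ((a y).mulVec (fun l => (∑ j, ξ j * gχ j y l) + ξ l)) ⬝ᵥ
            (fun l => (∑ j, ξ j * gχ j y l) + ξ l) ∂μ ∧
        α * (∑ i, ξ i ^ 2) ≤ ξ ⬝ᵥ a0.mulVec ξ) := by
  have : IsProbabilityMeasure μ :=
    ⟨by rw [hμ, Measure.restrict_apply_univ]; exact volume_unitCube d⟩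
  exact symm_and_spectral_bounds_of_cell_problem (G := fun j y l => gχ j y l) hα hαβ hameas
    hsym hbd (fun j => measurable_apply_of_hasGradientAt (hgrad j)) hInt
    (fun j l hint => by
      subst hμ
      exact integral_unitCube_gradient_eq_zero l (hgrad j) (fun x => hχper j x l) hint)
    (fun i j => hcell j (χ i) (gχ i) (hgrad i) (hχper i)) a0 ha0

/-- the homogenized tensor
`a⁰_{ij} = (1/|Y|)∫_Y eᵢᵀ a(y)(∇χ_j(y)+e_j) dy` defined via the periodic cell problems
`∫_Y a(∇χ_j+e_j)·∇w = 0` (for all `Y`-periodic `w`) is symmetric and satisfies spectral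
bounds `α'|ξ|² ≤ a⁰ξ·ξ ≤ β'|ξ|²` with `α ≤ α' ≤ β' ≤ β`; in particular
`a⁰ξ·ξ = (1/|Y|)∫_Y a(∇χ_ξ+ξ)·(∇χ_ξ+ξ) dy ≥ α|ξ|²` with `χ_ξ = Σ_j ξ_j χ_j`.
Here `Y = (0,1)^d` so `|Y| = 1` and `μ` is Lebesgue measure restricted to `Y`. -/
theorem stmt7 {d : ℕ}
    (μ : Measure (EuclideanSpace ℝ (Fin d)))
    (hμ : μ = volume.restrict {y : EuclideanSpace ℝ (Fin d) | ∀ i, y i ∈ Set.Ioo (0:ℝ) 1})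
    (α β : ℝ) (hα : 0 < α) (hαβ : α ≤ β)
    (a : EuclideanSpace ℝ (Fin d) → Matrix (Fin d) (Fin d) ℝ)
    (hameas : ∀ i j, Measurable fun y => a y i j)
    (haper : ∀ y i, a (y + EuclideanSpace.single i 1) = a y)
    (hsym : ∀ y, (a y).IsSymm)
    (hbd : ∀ y, ∀ ξ : Fin d → ℝ, α * (∑ i, ξ i ^ 2) ≤ ξ ⬝ᵥ (a y).mulVec ξ ∧
      ξ ⬝ᵥ (a y).mulVec ξ ≤ β * ∑ i, ξ i ^ 2)
    (χ : Fin d → EuclideanSpace ℝ (Fin d) → ℝ)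
    (gχ : Fin d → EuclideanSpace ℝ (Fin d) → EuclideanSpace ℝ (Fin d))
    (hgrad : ∀ j x, HasGradientAt (χ j) (gχ j x) x)
    (hχper : ∀ j x i, χ j (x + EuclideanSpace.single i 1) = χ j x)
    (hInt : ∀ i j, Integrable (fun y =>
      ((a y).mulVec (fun l => gχ i y l + (Pi.single i 1 : Fin d → ℝ) l)) ⬝ᵥ
        (fun l => gχ j y l + (Pi.single j 1 : Fin d → ℝ) l)) μ)
    (hcell : ∀ j, ∀ (w : EuclideanSpace ℝ (Fin d) → ℝ)
        (gw : EuclideanSpace ℝ (Fin d) → EuclideanSpace ℝ (Fin d)),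
      (∀ x, HasGradientAt w (gw x) x) →
      (∀ x i, w (x + EuclideanSpace.single i 1) = w x) →
      Integrable (fun y =>
        ((a y).mulVec (fun l => gχ j y l + (Pi.single j 1 : Fin d → ℝ) l)) ⬝ᵥ (fun l => gw y l)) μ →
      ∫ y, ((a y).mulVec (fun l => gχ j y l + (Pi.single j 1 : Fin d → ℝ) l)) ⬝ᵥ (fun l => gw y l) ∂μ = 0)
    (a0 : Matrix (Fin d) (Fin d) ℝ)
    (ha0 : ∀ i j, a0 i j = ∫ y,
      (Pi.single i 1 : Fin d → ℝ) ⬝ᵥ ((a y).mulVec (fun l => gχ j y l + (Pi.single j 1 : Fin d → ℝ) l)) ∂μ) :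
    (∀ i j, a0 i j = a0 j i) ∧
    (∃ α' β' : ℝ, α ≤ α' ∧ α' ≤ β' ∧ β' ≤ β ∧
      ∀ ξ : Fin d → ℝ, α' * (∑ i, ξ i ^ 2) ≤ ξ ⬝ᵥ a0.mulVec ξ ∧
        ξ ⬝ᵥ a0.mulVec ξ ≤ β' * ∑ i, ξ i ^ 2) ∧
    (∀ ξ : Fin d → ℝ,
      ξ ⬝ᵥ a0.mulVec ξ = ∫ y,
          ((a y).mulVec (fun l => (∑ j, ξ j * gχ j y l) + ξ l)) ⬝ᵥ
            (fun l => (∑ j, ξ j * gχ j y l) + ξ l) ∂μ ∧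
        α * (∑ i, ξ i ^ 2) ≤ ξ ⬝ᵥ a0.mulVec ξ) :=
  stmt7_general μ hμ α β hα hαβ a hameas hsym hbd χ gχ hgrad hχper hInt hcell a0 ha0
end
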